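/- arXiv:2504.14696 — 6 statements merged into one kernel-verified Lean document; each statement's English description precedes it below -/
import Mathlib

section
/- For real numbers q ∈ (0,1], k ≥ 2, n ≥ 1, and any p, p' ∈ [0,1] with |p - p'| ≤ 1/n, the ratio (q/k + (1-q)p') / (q/k + (1-q)p) is at most 1 + (1-q)k/(nq). -/
/-! Write `a = q / k` for the mass of the uniform component. The two output probabilities differ
by at most `(1 - q) / n`, and the denominator is at least `a`, so the ratio exceeds `1` by at most
`((1 - q) / n) / a = (1 - q) k / (n q)`. -/

theorem div_le_one_add_div_of_sub_le {a b c ε : ℝ} (ha : 0 < a) (hab : a ≤ b) (hε : 0 ≤ ε)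
    (hcb : c - b ≤ ε) : c / b ≤ 1 + ε / a := by
  have hb : 0 < b := ha.trans_le hab
  calc c / b ≤ (b + ε) / b := by gcongr; linarith
    _ = 1 + ε / b := by rw [add_div, div_self hb.ne']
    _ ≤ 1 + ε / a := by gcongr

theorem roo_likelihood_ratio_bound_general
    (q k n p p' : ℝ)
    (hq0 : 0 < q) (hq1 : q ≤ 1)
    (hk : 2 ≤ k) (hn : 1 ≤ n)
    (hp0 : 0 ≤ p)
    (hnear : |p - p'| ≤ 1 / n) :
    (q / k + (1 - q) * p') / (q / k + (1 - q) * p) ≤ 1 + (1 - q) * k / (n * q) := by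
  have hk0 : 0 < k := by linarith
  have hn0 : 0 < n := by linarith
  have hq : 0 ≤ 1 - q := sub_nonneg.mpr hq1
  have hdiff : p' - p ≤ 1 / n := by linarith [neg_abs_le (p - p')]
  have hgap : q / k + (1 - q) * p' - (q / k + (1 - q) * p) ≤ (1 - q) / n :=
    calc _ = (1 - q) * (p' - p) := by ring
      _ ≤ (1 - q) * (1 / n) := mul_le_mul_of_nonneg_left hdiff hq
      _ = (1 - q) / n := by ring
  calc _ ≤ 1 + (1 - q) / n / (q / k) :=
        div_le_one_add_div_of_sub_le (div_pos hq0 hk0)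
          (le_add_of_nonneg_right (mul_nonneg hq hp0)) (div_nonneg hq hn0.le) hgap
    _ = 1 + (1 - q) * k / (n * q) := by field_simp

theorem roo_likelihood_ratio_bound
    (q k n p p' : ℝ)
    (hq0 : 0 < q) (hq1 : q ≤ 1)
    (hk : 2 ≤ k) (hn : 1 ≤ n)
    (hp0 : 0 ≤ p) (hp1 : p ≤ 1)
    (hp'0 : 0 ≤ p') (hp'1 : p' ≤ 1)
    (hnear : |p - p'| ≤ 1 / n) :
    (q / k + (1 - q) * p') / (q / k + (1 - q) * p) ≤ 1 + (1 - q) * k / (n * q) :=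
  roo_likelihood_ratio_bound_general q k n p p' hq0 hq1 hk hn hp0 hnear
end

section
/- Let k ≥ 2, n ≥ 1, ε > 0, and set q = 1/(1 + (n/k)(e^ε - 1)). Then for all p, p' ∈ [0,1] with |p - p'| ≤ 1/n, one has q/k + (1-q)p' ≤ e^ε (q/k + (1-q)p). In other words, the ROO mechanism with this choice of q is ε-differentially private. -/
/-! With `E = exp ε`, the choice of `q` gives `1 - q = q · (n/k)(E - 1)`, so the output probability
`q/k + (1 - q) x` equals `(q/k) (1 + n (E - 1) x)`. Moving one entry raises `x` by at most `1/n`, which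
raises `1 + n (E - 1) x` by at most `E - 1`; since `E ≥ 1` and `x ≥ 0`, this stays within a factor `E`. -/

lemma div_add_one_sub_mul_eq_div_mul {k n a q : ℝ} (hD : 1 + n / k * a ≠ 0)
    (hq : q = 1 / (1 + n / k * a)) (x : ℝ) :
    q / k + (1 - q) * x = q / k * (1 + n * a * x) := by
  have hq' : 1 - q = q * (n / k * a) := by
    rw [hq, one_sub_div hD]
    ring
  rw [hq']
  ring

lemma one_add_mul_le_mul_one_add_mul {n E p p' : ℝ} (hn : 0 < n) (hE : 1 ≤ E) (hp : 0 ≤ p)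
    (hnear : p' - p ≤ 1 / n) :
    1 + n * (E - 1) * p' ≤ E * (1 + n * (E - 1) * p) := by
  have hstep : n * (E - 1) * (p' - p) ≤ E - 1 := by
    calc n * (E - 1) * (p' - p) ≤ n * (E - 1) * (1 / n) := by
          gcongr
      _ = E - 1 := by field_simp
  have hgrow : n * (E - 1) * p ≤ E * (n * (E - 1) * p) :=
    le_mul_of_one_le_left (by have := sub_nonneg.2 hE; positivity) hE
  linarith

theorem roo_is_eps_dp_general
    (k n ε p p' : ℝ)
    (hk : 2 ≤ k) (hn : 1 ≤ n) (hε : 0 < ε)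
    (hp0 : 0 ≤ p)
    (hnear : |p - p'| ≤ 1 / n)
    (q : ℝ) (hq : q = 1 / (1 + (n / k) * (Real.exp ε - 1))) :
    q / k + (1 - q) * p' ≤ Real.exp ε * (q / k + (1 - q) * p) := by
  have hk0 : 0 < k := by linarith
  have hE : 1 ≤ Real.exp ε := Real.one_le_exp hε.le
  have hD : 0 < 1 + n / k * (Real.exp ε - 1) :=
    add_pos_of_pos_of_nonneg one_pos (mul_nonneg (by positivity) (sub_nonneg.2 hE))
  have hqk : 0 < q / k := by rw [hq]; positivity
  rw [div_add_one_sub_mul_eq_div_mul hD.ne' hq, div_add_one_sub_mul_eq_div_mul hD.ne' hq,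
    mul_left_comm]
  refine mul_le_mul_of_nonneg_left (one_add_mul_le_mul_one_add_mul (by linarith) hE hp0 ?_) hqk.le
  linarith [neg_abs_le (p - p')]

theorem roo_is_eps_dp
    (k n ε p p' : ℝ)
    (hk : 2 ≤ k) (hn : 1 ≤ n) (hε : 0 < ε)
    (hp0 : 0 ≤ p) (hp1 : p ≤ 1)
    (hp'0 : 0 ≤ p') (hp'1 : p' ≤ 1)
    (hnear : |p - p'| ≤ 1 / n)
    (q : ℝ) (hq : q = 1 / (1 + (n / k) * (Real.exp ε - 1))) :
    q / k + (1 - q) * p' ≤ Real.exp ε * (q / k + (1 - q) * p) :=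
  roo_is_eps_dp_general k n ε p p' hk hn hε hp0 hnear q hq
end

section
/- For any real k ≥ 2, ε > 0, and α ∈ (0,1), the quantity (k(1-α) - 1)/(α(e^ε - 1)) is strictly less than (k-1)(1-α)/(αε). -/
theorem roo_sampling_complexity_lt_subrr
    (k ε α : ℝ) (hk : 2 ≤ k) (hε : 0 < ε) (hα0 : 0 < α) (hα1 : α < 1) :
    (k * (1 - α) - 1) / (α * (Real.exp ε - 1)) < (k - 1) * (1 - α) / (α * ε) := by
  have hnum : k * (1 - α) - 1 < (k - 1) * (1 - α) := by
    linarith [show k * (1 - α) - 1 = (k - 1) * (1 - α) - α by ring]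
  have hden : α * ε ≤ α * (Real.exp ε - 1) :=
    mul_le_mul_of_nonneg_left (by linarith [Real.add_one_le_exp ε]) hα0.le
  exact div_lt_div₀ hnum hden (mul_nonneg (by linarith) (by linarith)) (mul_pos hα0 hε)
end

section
/- Fix k ≥ 2, n > k, ε > 0, and define u_m = -m/n + 1/k - 1/n, v_m = e^ε(1/k - m/n), w_m = -1/n - m/n + (m/n)e^ε, q_0 = 1/(1 + (n/k)(e^ε - 1)), and recursively q_m = max{0, (u_m/v_m)q_{m-1} - w_m/v_m} for 1 ≤ m ≤ ⌊n/k⌋. Then the sequence (q_m) is non-increasing: q_m ≤ q_{m-1} for all 1 ≤ m ≤ ⌊n/k⌋. -/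
/-!
Write `a = e^ε - 1`, `r = n/k` and `p = r - m`. Then the recursion reads
`q_m = max 0 (T_m q_{m-1})` with the affine map `T_m x = ((p - 1) x - (m a - 1)) / ((a + 1) p)`,
whose fixed point is `f_m = (1 - m a) / (p a + 1)`, and whose slope `(p - 1) / ((a + 1) p)` is
`< 1`, and `≥ 0` as long as `p ≥ 1`. Hence `T_m x ≤ x` exactly when `x ≥ f_m`, and `T_m` maps
`[f_m, ∞)` into itself while `p ≥ 1`. Since `f_0 = q_0` and `f` is decreasing, induction gives
`q_{m-1} ≥ f_{m-1} ≥ f_m`, so `q_m ≤ q_{m-1}`.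
-/

noncomputable section

namespace DSROO

/-- The map `x ↦ (u_m / v_m) x - w_m / v_m` with `a = e^ε - 1`, `r = n / k`, `t = m`, after
cancelling the common factor `1 / n`; at `t = r` both sides are `0` by `x / 0 = 0`. -/
def step (a r t x : ℝ) : ℝ := ((r - t - 1) * x - (t * a - 1)) / ((a + 1) * (r - t))

def fixedPoint (a r t : ℝ) : ℝ := (1 - t * a) / ((r - t) * a + 1)

variable {a r t x : ℝ}

lemma step_sub_fixedPoint (ha : 0 < a) (ht : t < r) :
    step a r t x - fixedPoint a r t =
      (r - t - 1) / ((a + 1) * (r - t)) * (x - fixedPoint a r t) := by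
  have hp : 0 < r - t := sub_pos.2 ht
  have : (r - t) * a + 1 ≠ 0 := by positivity
  unfold step fixedPoint
  field_simp
  ring

lemma step_slope_lt_one (ha : 0 < a) (ht : t < r) : (r - t - 1) / ((a + 1) * (r - t)) < 1 := by
  have hp : 0 < r - t := sub_pos.2 ht
  rw [div_lt_one (by positivity)]
  nlinarith

lemma step_le_self (ha : 0 < a) (ht : t ≤ r) (hx₀ : 0 ≤ x) (hx : fixedPoint a r t ≤ x) :
    step a r t x ≤ x := by
  rcases ht.lt_or_eq with ht | rfl
  · nlinarith [step_sub_fixedPoint (x := x) ha ht, step_slope_lt_one ha ht,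
      mul_le_mul_of_nonneg_right (step_slope_lt_one ha ht).le (sub_nonneg.2 hx)]
  · simpa [step] using hx₀

lemma fixedPoint_le_step (ha : 0 < a) (ht : t + 1 ≤ r) (hx : fixedPoint a r t ≤ x) :
    fixedPoint a r t ≤ step a r t x := by
  have hslope : 0 ≤ (r - t - 1) / ((a + 1) * (r - t)) := by
    exact div_nonneg (by linarith) (mul_nonneg (by linarith) (by linarith))
  have h : t < r := by linarith
  nlinarith [step_sub_fixedPoint (x := x) ha h, mul_nonneg hslope (sub_nonneg.2 hx)]

lemma fixedPoint_succ_le (ha : 0 < a) (hr : 0 ≤ r) (ht : t + 1 ≤ r) :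
    fixedPoint a r (t + 1) ≤ fixedPoint a r t := by
  unfold fixedPoint
  rw [div_le_div_iff₀ (by nlinarith) (by nlinarith)]
  nlinarith [mul_nonneg ha.le (mul_nonneg ha.le hr)]

section Recursion

variable {N : ℕ} {q : ℕ → ℝ}

lemma cast_add_one_le (hN : (N : ℝ) ≤ r) {m : ℕ} (hm : m < N) : (m : ℝ) + 1 ≤ r :=
  le_trans (by exact_mod_cast hm) hN

lemma fixedPoint_le_recursion (ha : 0 < a) (hN : (N : ℝ) ≤ r)
    (hq₀ : q 0 = fixedPoint a r 0)
    (hq : ∀ m < N, q (m + 1) = max 0 (step a r (m + 1) (q m))) :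
    ∀ m < N, fixedPoint a r m ≤ q m := by
  intro m
  induction m with
  | zero => simp [hq₀]
  | succ m ih =>
    intro hm
    have hr : 0 ≤ r := N.cast_nonneg.trans hN
    have hm₁ : (m : ℝ) + 1 ≤ r := cast_add_one_le hN (by omega)
    have hm₂ : (m + 1 : ℝ) + 1 ≤ r := by exact_mod_cast cast_add_one_le hN hm
    have hfix : fixedPoint a r (m + 1) ≤ q m :=
      (fixedPoint_succ_le ha hr hm₁).trans (ih (by omega))
    rw [hq m (by omega)]
    push_cast
    exact (fixedPoint_le_step ha hm₂ hfix).trans (le_max_right _ _)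

theorem recursion_succ_le (ha : 0 < a) (hN : (N : ℝ) ≤ r)
    (hq₀ : q 0 = fixedPoint a r 0)
    (hq : ∀ m < N, q (m + 1) = max 0 (step a r (m + 1) (q m))) :
    ∀ m < N, q (m + 1) ≤ q m := by
  intro m hm
  have hr : 0 ≤ r := N.cast_nonneg.trans hN
  have hmr : (m : ℝ) + 1 ≤ r := cast_add_one_le hN hm
  have hq_nonneg : 0 ≤ q m := by
    cases m with
    | zero =>
      rw [hq₀, fixedPoint, zero_mul, sub_zero, sub_zero]
      positivity
    | succ m =>
      rw [hq m (by omega)]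
      exact le_max_left _ _
  have hfix : fixedPoint a r (m + 1) ≤ q m :=
    (fixedPoint_succ_le ha hr hmr).trans (fixedPoint_le_recursion ha hN hq₀ hq m hm)
  rw [hq m hm]
  exact max_le hq_nonneg (step_le_self ha hmr hq_nonneg hfix)

end Recursion

end DSROO

end

theorem dsroo_q_nonincreasing
    (k n : ℕ) (hk : 2 ≤ k) (hn : k < n) (ε : ℝ) (hε : 0 < ε)
    (u v w : ℕ → ℝ)
    (hu : ∀ m, u m = -(m : ℝ) / n + 1 / k - 1 / n)
    (hv : ∀ m, v m = Real.exp ε * (1 / k - (m : ℝ) / n))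
    (hw : ∀ m, w m = -1 / n - (m : ℝ) / n + ((m : ℝ) / n) * Real.exp ε)
    (q : ℕ → ℝ)
    (hq0 : q 0 = 1 / (1 + ((n : ℝ) / k) * (Real.exp ε - 1)))
    (hqm : ∀ m, 1 ≤ m → m ≤ n / k →
      q m = max 0 ((u m / v m) * q (m - 1) - w m / v m)) :
    ∀ m, 1 ≤ m → m ≤ n / k → q m ≤ q (m - 1) := by
  have ha : 0 < Real.exp ε - 1 := sub_pos.2 (Real.one_lt_exp_iff.2 hε)
  have hn₀ : (n : ℝ) ≠ 0 := by exact_mod_cast (by omega : n ≠ 0)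
  have hk₀ : (k : ℝ) ≠ 0 := by exact_mod_cast (by omega : k ≠ 0)
  have hstep : ∀ (j : ℕ) (x : ℝ),
      u j / v j * x - w j / v j = DSROO.step (Real.exp ε - 1) (n / k) j x := by
    intro j x
    rw [div_mul_eq_mul_div, div_sub_div_same, DSROO.step, ← mul_div_mul_left _ _ hn₀, hu, hv, hw]
    congr 1 <;> field_simp <;> ring
  have hq₀ : q 0 = DSROO.fixedPoint (Real.exp ε - 1) (n / k) 0 := by
    rw [hq0, DSROO.fixedPoint]
    ring
  intro m hm₁ hm
  obtain ⟨j, rfl⟩ : ∃ j, m = j + 1 := ⟨m - 1, by omega⟩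
  refine DSROO.recursion_succ_le ha Nat.cast_div_le hq₀ (fun i hi => ?_) j hm
  rw [hqm (i + 1) (by omega) hi, hstep, Nat.cast_succ, Nat.add_sub_cancel]
end

section
/- Fix k ≥ 2, n > k, ε > 0, and define t_m = w_m/(u_m - v_m) where u_m = -m/n + 1/k - 1/n, v_m = e^ε(1/k - m/n), w_m = -1/n - m/n + (m/n)e^ε. Then t_0 = 1/(1 + (n/k)(e^ε - 1)), and t_m is strictly decreasing in m for 0 ≤ m < n/k; explicitly, t_m = 1 - ((1/k)(e^ε - 1))/((1/k - m/n)(e^ε - 1) + 1/n). -/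
/-!
Writing `E = exp ε`, `a = 1/k - m/n` and `D = a (E - 1) + 1/n`, one has `u_m - v_m = -D` and
`w_m = -(D - (E - 1)/k)`, so `t_m = 1 - ((E - 1)/k) / D`. For `m < n/k` we have `a > 0`, hence
`D > 0`, and `D` decreases strictly in `m` because `E > 1`; so `t_m` decreases strictly.
-/

namespace DSROO

/-- The denominator `D` above, with `m` relaxed to a real `x`. -/
noncomputable def denom (k n E x : ℝ) : ℝ := (1 / k - x / n) * (E - 1) + 1 / n

variable {k n E x : ℝ}

theorem w_div_u_sub_v_eq (h : denom k n E x ≠ 0) :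
    (-1 / n - x / n + (x / n) * E) / ((-x / n + 1 / k - 1 / n) - E * (1 / k - x / n)) =
      1 - (1 / k * (E - 1)) / denom k n E x := by
  have hw : -1 / n - x / n + (x / n) * E = -(denom k n E x - 1 / k * (E - 1)) := by
    unfold denom; ring
  have huv : (-x / n + 1 / k - 1 / n) - E * (1 / k - x / n) = -denom k n E x := by
    unfold denom; ring
  rw [hw, huv, neg_div_neg_eq, sub_div, div_self h]

theorem one_sub_div_denom_zero (hn : n ≠ 0) (h : denom k n E 0 ≠ 0) :
    1 - (1 / k * (E - 1)) / denom k n E 0 = 1 / (1 + (n / k) * (E - 1)) := by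
  have hnum : denom k n E 0 - 1 / k * (E - 1) = 1 / n := by
    unfold denom; ring
  rw [one_sub_div h, hnum, div_div]
  congr 1
  unfold denom
  rw [mul_add, mul_one_div_cancel hn]
  ring

theorem denom_pos (hn : 0 < n) (hE : 1 ≤ E) (hx : 0 ≤ x) (hxk : x < n / k) :
    0 < denom k n E x := by
  have hk : 0 < k := (div_pos_iff_of_pos_left hn).mp (hx.trans_lt hxk)
  have ha : 0 < 1 / k - x / n := by
    rw [sub_pos, div_lt_div_iff₀ hn hk, one_mul]
    exact (lt_div_iff₀ hk).mp hxk
  unfold denom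
  have := sub_nonneg.mpr hE
  positivity

theorem denom_strictAnti (hn : 0 < n) (hE : 1 < E) : StrictAnti (denom k n E) := by
  intro x y hxy
  have : x / n < y / n := div_lt_div_of_pos_right hxy hn
  unfold denom
  nlinarith [sub_pos.mpr hE]

theorem strictAntiOn_one_sub_div_denom (hn : 0 < n) (hE : 1 < E) :
    StrictAntiOn (fun x => 1 - (1 / k * (E - 1)) / denom k n E x) (Set.Ico 0 (n / k)) := by
  rintro x ⟨hx0, hxk⟩ y ⟨hy0, hyk⟩ hxy
  have hk : 0 < k := (div_pos_iff_of_pos_left hn).mp (hx0.trans_lt hxk)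
  have hc : 0 < 1 / k * (E - 1) := by
    have := sub_pos.mpr hE
    positivity
  exact sub_lt_sub_left (div_lt_div_of_pos_left hc (denom_pos hn hE.le hy0 hyk)
    (denom_strictAnti hn hE hxy)) 1

end DSROO

open DSROO in
theorem dsroo_t_formula_and_decreasing_general
    (k n : ℕ) (hn : k < n) (ε : ℝ) (hε : 0 < ε)
    (u v w t : ℕ → ℝ)
    (hu : ∀ m, u m = -(m : ℝ) / n + 1 / k - 1 / n)
    (hv : ∀ m, v m = Real.exp ε * (1 / k - (m : ℝ) / n))
    (hw : ∀ m, w m = -1 / n - (m : ℝ) / n + ((m : ℝ) / n) * Real.exp ε)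
    (ht : ∀ m, t m = w m / (u m - v m)) :
    t 0 = 1 / (1 + ((n : ℝ) / k) * (Real.exp ε - 1)) ∧
    (∀ m : ℕ, (m : ℝ) < (n : ℝ) / k →
      t m = 1 - ((1 / k) * (Real.exp ε - 1)) /
        ((1 / k - (m : ℝ) / n) * (Real.exp ε - 1) + 1 / n)) ∧
    (∀ m : ℕ, ((m : ℝ) + 1) < (n : ℝ) / k → t (m + 1) < t m) := by
  have hn0 : (0 : ℝ) < n := by exact_mod_cast Nat.zero_lt_of_lt hn
  have hE : 1 < Real.exp ε := Real.one_lt_exp_iff.mpr hε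
  have ht_eq : ∀ m : ℕ, denom k n (Real.exp ε) m ≠ 0 →
      t m = 1 - (1 / k * (Real.exp ε - 1)) / denom k n (Real.exp ε) m := fun m h => by
    rw [ht, hu, hv, hw]
    exact w_div_u_sub_v_eq h
  have hD0 : denom k n (Real.exp ε) 0 ≠ 0 := by
    unfold denom
    rw [zero_div, sub_zero]
    have := sub_pos.mpr hE
    positivity
  refine ⟨?_, fun m hm => ht_eq m (denom_pos hn0 hE.le m.cast_nonneg hm).ne', fun m hm => ?_⟩
  · rw [ht_eq 0 (by simpa using hD0), Nat.cast_zero, one_sub_div_denom_zero hn0.ne' hD0]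
  · have hm1 : ((m + 1 : ℕ) : ℝ) < n / k := by push_cast; exact hm
    have hm0 : (m : ℝ) < n / k := by linarith
    rw [ht_eq m (denom_pos hn0 hE.le m.cast_nonneg hm0).ne',
      ht_eq (m + 1) (denom_pos hn0 hE.le (m + 1).cast_nonneg hm1).ne']
    exact strictAntiOn_one_sub_div_denom hn0 hE ⟨m.cast_nonneg, hm0⟩
      ⟨(m + 1).cast_nonneg, hm1⟩ (by push_cast; exact lt_add_one _)

theorem dsroo_t_formula_and_decreasing
    (k n : ℕ) (hk : 2 ≤ k) (hn : k < n) (ε : ℝ) (hε : 0 < ε)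
    (u v w t : ℕ → ℝ)
    (hu : ∀ m, u m = -(m : ℝ) / n + 1 / k - 1 / n)
    (hv : ∀ m, v m = Real.exp ε * (1 / k - (m : ℝ) / n))
    (hw : ∀ m, w m = -1 / n - (m : ℝ) / n + ((m : ℝ) / n) * Real.exp ε)
    (ht : ∀ m, t m = w m / (u m - v m)) :
    t 0 = 1 / (1 + ((n : ℝ) / k) * (Real.exp ε - 1)) ∧
    (∀ m : ℕ, (m : ℝ) < (n : ℝ) / k →
      t m = 1 - ((1 / k) * (Real.exp ε - 1)) /
        ((1 / k - (m : ℝ) / n) * (Real.exp ε - 1) + 1 / n)) ∧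
    (∀ m : ℕ, ((m : ℝ) + 1) < (n : ℝ) / k → t (m + 1) < t m) :=
  dsroo_t_formula_and_decreasing_general k n hn ε hε u v w t hu hv hw ht
end

section
/- Fix k ≥ 2, n > k, ε > 0, and let u_m, v_m, w_m, and the non-increasing sequence q_m ∈ [0,1] be as in DS-ROO. Then for m = 0: u_0 q_1 < v_0 q_0 + w_0, and for each integer m with 1 ≤ m ≤ ⌊n/k⌋ - 1: u_m q_{m+1} ≤ v_m q_m + w_m. -/
/-!
The threshold `q₀ = k / (k + n (e^ε - 1))` makes the `m = 0` condition an equality, and for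
every `m`, `u_m q₀ - w_m` falls short of `v_m q₀` by exactly `m (e^ε - 1)² q₀ / k`.
Hence `q₁ < q₀`, which gives the strict inequality at `m = 0`. For `m ≥ 1` the recursion
`q_m ≥ (u_m q_{m-1} - w_m) / v_m` together with `u_m ≥ 0` and `q_{m+1} ≤ q_{m-1}` gives the rest.
-/

section RecursionStep

variable {u v w p p' q : ℝ}

theorem mul_le_mul_add_of_eq_max (hu : 0 ≤ u) (hv : 0 < v) (hp : p' ≤ p)
    (hq : q = max 0 (u / v * p - w / v)) : u * p' ≤ v * q + w := by
  have : (u * p - w) / v ≤ q := by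
    rw [hq, sub_div, mul_div_right_comm]
    exact le_max_right _ _
  rw [div_le_iff₀' hv] at this
  nlinarith [mul_le_mul_of_nonneg_left hp hu]

theorem mul_lt_mul_add_of_eq_max {u₀ v₀ w₀ q₀ q₁ : ℝ} (hu₀ : 0 < u₀) (hv : 0 < v) (hq₀ : 0 < q₀)
    (hfix : u₀ * q₀ - w₀ = v₀ * q₀) (hstep : u * q₀ - w < v * q₀)
    (hq₁ : q₁ = max 0 (u / v * q₀ - w / v)) : u₀ * q₁ < v₀ * q₀ + w₀ := by
  rw [← div_lt_iff₀' hv, sub_div, mul_div_right_comm] at hstep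
  have : q₁ < q₀ := hq₁ ▸ max_lt hq₀ hstep
  nlinarith [mul_lt_mul_of_pos_left this hu₀]

end RecursionStep

section Coefficients

variable {k n a m q : ℝ}

theorem dsroo_u_eq (hk : k ≠ 0) (hn : n ≠ 0) :
    -m / n + 1 / k - 1 / n = (n - (m + 1) * k) / (k * n) := by
  field_simp
  ring

theorem dsroo_u_nonneg (hk : 0 < k) (hn : 0 < n) (hm : (m + 1) * k ≤ n) :
    0 ≤ -m / n + 1 / k - 1 / n := by
  rw [dsroo_u_eq hk.ne' hn.ne']
  exact div_nonneg (sub_nonneg.mpr hm) (by positivity)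

theorem dsroo_u_pos (hk : 0 < k) (hn : 0 < n) (hm : (m + 1) * k < n) :
    0 < -m / n + 1 / k - 1 / n := by
  rw [dsroo_u_eq hk.ne' hn.ne']
  exact div_pos (sub_pos.mpr hm) (by positivity)

theorem dsroo_v_pos (hk : 0 < k) (hn : 0 < n) (ha : 0 < a) (hm : m * k < n) :
    0 < a * (1 / k - m / n) := by
  have : 1 / k - m / n = (n - m * k) / (k * n) := by field_simp
  rw [this]
  exact mul_pos ha (div_pos (sub_pos.mpr hm) (by positivity))

theorem dsroo_q0_mul_eq (hk : k ≠ 0) (hden : k + n * (a - 1) ≠ 0) :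
    1 / (1 + n / k * (a - 1)) * (k + n * (a - 1)) = k := by
  field_simp

theorem dsroo_u_mul_sub_w_eq (hk : k ≠ 0) (hn : n ≠ 0) (hq : q * (k + n * (a - 1)) = k) :
    (-m / n + 1 / k - 1 / n) * q - (-1 / n - m / n + m / n * a)
      = a * (1 / k - m / n) * q - m * (a - 1) ^ 2 / k * q := by
  linear_combination (norm := skip) ((a - 1) * m - 1) / (n * k) * hq
  field_simp
  ring

end Coefficients

theorem dsroo_dp_condition_m_plus_one_general
    (k n : ℕ) (hk : 2 ≤ k) (hn : k < n) (ε : ℝ) (hε : 0 < ε)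
    (u v w : ℕ → ℝ)
    (hu : ∀ m, u m = -(m : ℝ) / n + 1 / k - 1 / n)
    (hv : ∀ m, v m = Real.exp ε * (1 / k - (m : ℝ) / n))
    (hw : ∀ m, w m = -1 / n - (m : ℝ) / n + ((m : ℝ) / n) * Real.exp ε)
    (q : ℕ → ℝ)
    (hmono : ∀ m m', m ≤ m' → q m' ≤ q m)
    (hq0 : q 0 = 1 / (1 + ((n : ℝ) / k) * (Real.exp ε - 1)))
    (hqm : ∀ m, 1 ≤ m → m ≤ n / k →
      q m = max 0 ((u m / v m) * q (m - 1) - w m / v m)) :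
    u 0 * q 1 < v 0 * q 0 + w 0 ∧
    ∀ m, 1 ≤ m → m ≤ n / k - 1 → u m * q (m + 1) ≤ v m * q m + w m := by
  have hk0 : (0 : ℝ) < k := by exact_mod_cast (by omega : 0 < k)
  have hkn : (k : ℝ) < n := by exact_mod_cast hn
  have ha : 1 < Real.exp ε := Real.one_lt_exp_iff.mpr hε
  have hden : (0 : ℝ) < k + n * (Real.exp ε - 1) := by nlinarith
  have hq0' : q 0 * (k + n * (Real.exp ε - 1)) = k := hq0 ▸ dsroo_q0_mul_eq hk0.ne' hden.ne'
  have hq0pos : 0 < q 0 := pos_of_mul_pos_left (hq0'.symm ▸ hk0) hden.le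
  have hgap (m : ℕ) : u m * q 0 - w m = v m * q 0 - m * (Real.exp ε - 1) ^ 2 / k * q 0 := by
    rw [hu, hv, hw]
    exact dsroo_u_mul_sub_w_eq hk0.ne' (by linarith) hq0'
  have hv_pos (m : ℕ) (hm : (m : ℝ) * k < n) : 0 < v m :=
    hv m ▸ dsroo_v_pos hk0 (by linarith) (Real.exp_pos ε) hm
  refine ⟨mul_lt_mul_add_of_eq_max ?_ (hv_pos 1 (by simpa using hkn)) hq0pos ?_ ?_
    (hqm 1 le_rfl ((Nat.one_le_div_iff (by omega)).mpr hn.le)), ?_⟩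
  · exact hu 0 ▸ dsroo_u_pos hk0 (by linarith) (by simpa using hkn)
  · simpa using hgap 0
  · have : 0 < (Real.exp ε - 1) ^ 2 / k * q 0 := by
      have := sub_pos.mpr ha
      positivity
    linarith [by simpa only [Nat.cast_one, one_mul] using hgap 1]
  · intro m hm1 hm2
    have hmk : ((m : ℝ) + 1) * k ≤ n := by
      exact_mod_cast (Nat.le_div_iff_mul_le (by omega)).mp (by omega : m + 1 ≤ n / k)
    refine mul_le_mul_add_of_eq_max ?_ (hv_pos m (by nlinarith)) (hmono _ _ (by omega))
      (hqm m hm1 (by omega))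
    exact hu m ▸ dsroo_u_nonneg hk0 (by linarith) hmk

theorem dsroo_dp_condition_m_plus_one
    (k n : ℕ) (hk : 2 ≤ k) (hn : k < n) (ε : ℝ) (hε : 0 < ε)
    (u v w : ℕ → ℝ)
    (hu : ∀ m, u m = -(m : ℝ) / n + 1 / k - 1 / n)
    (hv : ∀ m, v m = Real.exp ε * (1 / k - (m : ℝ) / n))
    (hw : ∀ m, w m = -1 / n - (m : ℝ) / n + ((m : ℝ) / n) * Real.exp ε)
    (q : ℕ → ℝ)
    (hq01 : ∀ m, 0 ≤ q m ∧ q m ≤ 1)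
    (hmono : ∀ m m', m ≤ m' → q m' ≤ q m)
    (hq0 : q 0 = 1 / (1 + ((n : ℝ) / k) * (Real.exp ε - 1)))
    (hqm : ∀ m, 1 ≤ m → m ≤ n / k →
      q m = max 0 ((u m / v m) * q (m - 1) - w m / v m)) :
    u 0 * q 1 < v 0 * q 0 + w 0 ∧
    ∀ m, 1 ≤ m → m ≤ n / k - 1 → u m * q (m + 1) ≤ v m * q m + w m :=
  dsroo_dp_condition_m_plus_one_general k n hk hn ε hε u v w hu hv hw q hmono hq0 hqm
end
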